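/- Define the finite sets 𝒩₁ = {24}, 𝒩₂ = {120, 48}, 𝒩₃ = {72, 168}, 𝒩₄ = {96, 240}, 𝒩₅ = {264}, 𝒩₆ = {144, 336, 360, 840, 312}. Let N be a positive integer and let k ∈ {1, 2, 3, 4, 5, 6}. If k(N) divides k, then N divides some element of 𝒩_k. -/
import Mathlib
set_option maxRecDepth 100000


/-- `k(N)`: the cardinality of the image of the squaring map `x ↦ x²`
on the unit group `(ℤ/Nℤ)ˣ`. -/
noncomputable def sqImageCard (N : ℕ) : ℕ :=
  Nat.card (Set.range fun x : (ZMod N)ˣ => x ^ 2)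

/-- The sets `𝒩ₖ` from Corollary A.1. -/
def calN : ℕ → Finset ℕ
  | 1 => {24}
  | 2 => {120, 48}
  | 3 => {72, 168}
  | 4 => {96, 240}
  | 5 => {264}
  | 6 => {144, 336, 360, 840, 312}
  | _ => ∅

lemma sqImageCard_eq_range (N : ℕ) :
    sqImageCard N = Nat.card ((powMonoidHom 2 : (ZMod N)ˣ →* (ZMod N)ˣ).range) := rfl

lemma sqImageCard_eq_card_image (N : ℕ) [NeZero N] :
    sqImageCard N = (Finset.image (fun x : (ZMod N)ˣ => x ^ 2) Finset.univ).card := by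
  rw [sqImageCard, Nat.card_eq_fintype_card, ← Set.toFinset_card, Set.toFinset_range]

lemma sqImageCard_eq_nat (N : ℕ) [NeZero N] :
    sqImageCard N
      = ((((Finset.range N).filter fun x => Nat.gcd x N = 1)).image fun x => x * x % N).card := by
  rw [sqImageCard_eq_card_image]
  apply Finset.card_bij (fun (a : (ZMod N)ˣ) _ => ((a : ZMod N)).val)
  · intro a ha
    simp only [Finset.mem_image, Finset.mem_univ, true_and] at ha
    obtain ⟨u, rfl⟩ := ha
    simp only [Finset.mem_image, Finset.mem_filter, Finset.mem_range]
    refine ⟨((u : ZMod N)).val, ⟨ZMod.val_lt _, (ZMod.val_coe_unit_coprime u)⟩, ?_⟩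
    rw [Units.val_pow_eq_pow_val, pow_two, ZMod.val_mul]
  · intro a _ b _ hab
    ext
    exact ZMod.val_injective N hab
  · intro b hb
    simp only [Finset.mem_image, Finset.mem_filter, Finset.mem_range] at hb
    obtain ⟨x, ⟨hx, hco⟩, rfl⟩ := hb
    refine ⟨(ZMod.unitOfCoprime x hco) ^ 2, by simp, ?_⟩
    rw [Units.val_pow_eq_pow_val, pow_two, ZMod.val_mul, ZMod.coe_unitOfCoprime,
      ZMod.val_natCast_of_lt hx]

lemma sqImageCard_dvd {d N : ℕ} [NeZero N] (h : d ∣ N) :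
    sqImageCard d ∣ sqImageCard N := by
  haveI : NeZero d := ⟨by rintro rfl; exact (NeZero.ne N) (zero_dvd_iff.mp h)⟩
  rw [sqImageCard_eq_range, sqImageCard_eq_range]
  set f := ZMod.unitsMap h with hf
  have hfs : Function.Surjective f := ZMod.unitsMap_surjective h
  have key : ((powMonoidHom 2 : (ZMod N)ˣ →* (ZMod N)ˣ).range).map f
      = (powMonoidHom 2 : (ZMod d)ˣ →* (ZMod d)ˣ).range := by
    rw [← MonoidHom.range_comp]
    have : (f.comp (powMonoidHom 2)) = (powMonoidHom 2).comp f := by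
      ext x; simp [powMonoidHom, map_pow]
    rw [this, MonoidHom.range_comp, (MonoidHom.range_eq_top).mpr hfs]
    exact (MonoidHom.range_eq_map _).symm
  calc Nat.card ((powMonoidHom 2 : (ZMod d)ˣ →* (ZMod d)ˣ).range)
      = Nat.card (((powMonoidHom 2 : (ZMod N)ˣ →* (ZMod N)ˣ).range).map f) := by rw [key]
    _ ∣ Nat.card ((powMonoidHom 2 : (ZMod N)ˣ →* (ZMod N)ˣ).range) :=
        Subgroup.card_dvd_of_surjective _ (f.subgroupMap_surjective _)

lemma big_prime {p : ℕ} (hp : p.Prime) (h : sqImageCard p ≤ 6) : p ≤ 13 := by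
  haveI : Fact p.Prime := ⟨hp⟩
  set φ := (powMonoidHom 2 : (ZMod p)ˣ →* (ZMod p)ˣ) with hφ
  have h1 : Nat.card (ZMod p)ˣ = p - 1 := by
    rw [Nat.card_eq_fintype_card, ZMod.card_units]
  have h2 := Subgroup.card_eq_card_quotient_mul_card_subgroup φ.ker
  have h3 : Nat.card ((ZMod p)ˣ ⧸ φ.ker) = sqImageCard p :=
    (Nat.card_congr (QuotientGroup.quotientKerEquivRange φ).toEquiv).trans
      (sqImageCard_eq_range p).symm
  have h4 : Nat.card φ.ker ≤ 2 := by
    have hsub : (φ.ker : Set (ZMod p)ˣ) ⊆ {1, -1} := by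
      intro x hx
      have hx2 : x ^ 2 = 1 := by simpa [hφ, powMonoidHom] using hx
      have : (x : ZMod p) * (x : ZMod p) = 1 := by
        have := congrArg (Units.val) hx2
        simpa [pow_two] using this
      rcases mul_self_eq_one_iff.mp this with h | h
      · left; exact Units.ext h
      · right; exact Units.ext (by simpa using h)
    calc Nat.card φ.ker = (φ.ker : Set (ZMod p)ˣ).ncard := (Nat.card_coe_set_eq _)
      _ ≤ ({1, -1} : Set (ZMod p)ˣ).ncard := Set.ncard_le_ncard hsub (Set.toFinite _)
      _ ≤ 2 := (Set.ncard_insert_le _ _).trans (by simp)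
  have hp2 := hp.two_le
  rw [h1, h3] at h2
  have := Nat.mul_le_mul h h4
  omega

lemma dvd_helper {N a b c d e f : ℕ} (hN : N ≠ 0)
    (h2 : ¬ 2^(a+1) ∣ N) (h3 : ¬ 3^(b+1) ∣ N) (h5 : ¬ 5^(c+1) ∣ N)
    (h7 : ¬ 7^(d+1) ∣ N) (h11 : ¬ 11^(e+1) ∣ N) (h13 : ¬ 13^(f+1) ∣ N)
    (hbig : ∀ p, p.Prime → p ∣ N → p ≤ 13) :
    N ∣ 2^a * 3^b * 5^c * 7^d * 11^e * 13^f := by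
  set M := 2^a * 3^b * 5^c * 7^d * 11^e * 13^f with hM
  have hM0 : M ≠ 0 := by positivity
  rw [← Nat.factorization_le_iff_dvd hN hM0, Finsupp.le_def]
  intro p
  by_cases hp : p.Prime
  · by_cases hpN : p ∣ N
    · have hple := hbig p hp hpN
      have key : ∀ n : ℕ, ¬ p^(n+1) ∣ N → N.factorization p ≤ n := by
        intro n hq
        by_contra hlt
        exact hq ((Nat.Prime.pow_dvd_iff_le_factorization hp hN).mpr (by omega))
      have target : ∀ n : ℕ, p ^ n ∣ M → n ≤ M.factorization p := fun n hn =>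
        (Nat.Prime.pow_dvd_iff_le_factorization hp hM0).mp hn
      have h2le := hp.two_le
      interval_cases p
      · exact le_trans (key a h2) (target a ⟨3^b*5^c*7^d*11^e*13^f, by ring⟩)
      · exact le_trans (key b h3) (target b ⟨2^a*5^c*7^d*11^e*13^f, by ring⟩)
      · exact absurd hp (by norm_num)
      · exact le_trans (key c h5) (target c ⟨2^a*3^b*7^d*11^e*13^f, by ring⟩)
      · exact absurd hp (by norm_num)
      · exact le_trans (key d h7) (target d ⟨2^a*3^b*5^c*11^e*13^f, by ring⟩)
      · exact absurd hp (by norm_num)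
      · exact absurd hp (by norm_num)
      · exact absurd hp (by norm_num)
      · exact le_trans (key e h11) (target e ⟨2^a*3^b*5^c*7^d*13^f, by ring⟩)
      · exact absurd hp (by norm_num)
      · exact le_trans (key f h13) (target f ⟨2^a*3^b*5^c*7^d*11^e, by ring⟩)
    · simp [Nat.factorization_eq_zero_of_not_dvd hpN]
  · simp [Nat.factorization_eq_zero_of_not_prime _ hp]

theorem stmt_2 (N k : ℕ) (hN : 0 < N) (hk1 : 1 ≤ k) (hk6 : k ≤ 6)
    (h : sqImageCard N ∣ k) :
    ∃ m ∈ calN k, N ∣ m := by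
  haveI : NeZero N := ⟨hN.ne'⟩
  have hN0 : N ≠ 0 := hN.ne'
  have key : ∀ d : ℕ, d ∣ N → sqImageCard d ∣ k := fun d hd => (sqImageCard_dvd hd).trans h
  have hbig : ∀ p, p.Prime → p ∣ N → p ≤ 13 := fun p hp hpN =>
    big_prime hp (le_trans (Nat.le_of_dvd (by omega) (key p hpN)) hk6)
  have nb : ∀ d v : ℕ, sqImageCard d = v → ¬ v ∣ k → ¬ d ∣ N := fun d v hv hvk hd =>
    hvk (hv ▸ key d hd)
  interval_cases k
  · -- k = 1
    have n16 := nb 16 2 (by rw [sqImageCard_eq_nat]; rfl) (by decide)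
    have n9 := nb 9 3 (by rw [sqImageCard_eq_nat]; rfl) (by decide)
    have n5 := nb 5 2 (by rw [sqImageCard_eq_nat]; rfl) (by decide)
    have n7 := nb 7 3 (by rw [sqImageCard_eq_nat]; rfl) (by decide)
    have n11 := nb 11 5 (by rw [sqImageCard_eq_nat]; rfl) (by decide)
    have n13 := nb 13 6 (by rw [sqImageCard_eq_nat]; rfl) (by decide)
    exact ⟨24, by decide, by
      simpa using dvd_helper (a := 3) (b := 1) (c := 0) (d := 0) (e := 0) (f := 0) hN0
        (by simpa using n16) (by simpa using n9) (by simpa using n5) (by simpa using n7)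
        (by simpa using n11) (by simpa using n13) hbig⟩
  · -- k = 2
    have n32 := nb 32 4 (by rw [sqImageCard_eq_nat]; rfl) (by decide)
    have n9 := nb 9 3 (by rw [sqImageCard_eq_nat]; rfl) (by decide)
    have n25 := nb 25 10 (by rw [sqImageCard_eq_nat]; rfl) (by decide)
    have n7 := nb 7 3 (by rw [sqImageCard_eq_nat]; rfl) (by decide)
    have n11 := nb 11 5 (by rw [sqImageCard_eq_nat]; rfl) (by decide)
    have n13 := nb 13 6 (by rw [sqImageCard_eq_nat]; rfl) (by decide)
    have n80 := nb 80 4 (by rw [sqImageCard_eq_nat]; rfl) (by decide)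
    by_cases hc5 : (5:ℕ) ∣ N
    · have n16 : ¬ (16:ℕ) ∣ N := fun h16 =>
        n80 (Nat.Coprime.mul_dvd_of_dvd_of_dvd (by decide) h16 hc5)
      exact ⟨120, by decide, by
        simpa using dvd_helper (a := 3) (b := 1) (c := 1) (d := 0) (e := 0) (f := 0) hN0
          (by simpa using n16) (by simpa using n9) (by simpa using n25) (by simpa using n7)
          (by simpa using n11) (by simpa using n13) hbig⟩
    · exact ⟨48, by decide, by
        simpa using dvd_helper (a := 4) (b := 1) (c := 0) (d := 0) (e := 0) (f := 0) hN0
          (by simpa using n32) (by simpa using n9) (by simpa using hc5) (by simpa using n7)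
          (by simpa using n11) (by simpa using n13) hbig⟩
  · -- k = 3
    have n5 := nb 5 2 (by rw [sqImageCard_eq_nat]; rfl) (by decide)
    have n11 := nb 11 5 (by rw [sqImageCard_eq_nat]; rfl) (by decide)
    have n13 := nb 13 6 (by rw [sqImageCard_eq_nat]; rfl) (by decide)
    have n16 := nb 16 2 (by rw [sqImageCard_eq_nat]; rfl) (by decide)
    have n63 := nb 63 9 (by rw [sqImageCard_eq_nat]; rfl) (by decide)
    have n49 := nb 49 21 (by rw [sqImageCard_eq_nat]; rfl) (by decide)
    have n27 := nb 27 9 (by rw [sqImageCard_eq_nat]; rfl) (by decide)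
    by_cases hc7 : (7:ℕ) ∣ N
    · have n9 : ¬ (9:ℕ) ∣ N := fun h9 =>
        n63 (Nat.Coprime.mul_dvd_of_dvd_of_dvd (by decide) h9 hc7)
      exact ⟨168, by decide, by
        simpa using dvd_helper (a := 3) (b := 1) (c := 0) (d := 1) (e := 0) (f := 0) hN0
          (by simpa using n16) (by simpa using n9) (by simpa using n5) (by simpa using n49)
          (by simpa using n11) (by simpa using n13) hbig⟩
    · exact ⟨72, by decide, by
        simpa using dvd_helper (a := 3) (b := 2) (c := 0) (d := 0) (e := 0) (f := 0) hN0
          (by simpa using n16) (by simpa using n27) (by simpa using n5) (by simpa using hc7)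
          (by simpa using n11) (by simpa using n13) hbig⟩
  · -- k = 4
    have n7 := nb 7 3 (by rw [sqImageCard_eq_nat]; rfl) (by decide)
    have n9 := nb 9 3 (by rw [sqImageCard_eq_nat]; rfl) (by decide)
    have n11 := nb 11 5 (by rw [sqImageCard_eq_nat]; rfl) (by decide)
    have n13 := nb 13 6 (by rw [sqImageCard_eq_nat]; rfl) (by decide)
    have n160 := nb 160 8 (by rw [sqImageCard_eq_nat]; rfl) (by decide)
    have n25 := nb 25 10 (by rw [sqImageCard_eq_nat]; rfl) (by decide)
    have n64 := nb 64 8 (by rw [sqImageCard_eq_nat]; rfl) (by decide)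
    by_cases hc5 : (5:ℕ) ∣ N
    · have n32 : ¬ (32:ℕ) ∣ N := fun h32 =>
        n160 (Nat.Coprime.mul_dvd_of_dvd_of_dvd (by decide) h32 hc5)
      exact ⟨240, by decide, by
        simpa using dvd_helper (a := 4) (b := 1) (c := 1) (d := 0) (e := 0) (f := 0) hN0
          (by simpa using n32) (by simpa using n9) (by simpa using n25) (by simpa using n7)
          (by simpa using n11) (by simpa using n13) hbig⟩
    · exact ⟨96, by decide, by
        simpa using dvd_helper (a := 5) (b := 1) (c := 0) (d := 0) (e := 0) (f := 0) hN0
          (by simpa using n64) (by simpa using n9) (by simpa using hc5) (by simpa using n7)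
          (by simpa using n11) (by simpa using n13) hbig⟩
  · -- k = 5
    have n16 := nb 16 2 (by rw [sqImageCard_eq_nat]; rfl) (by decide)
    have n9 := nb 9 3 (by rw [sqImageCard_eq_nat]; rfl) (by decide)
    have n5 := nb 5 2 (by rw [sqImageCard_eq_nat]; rfl) (by decide)
    have n7 := nb 7 3 (by rw [sqImageCard_eq_nat]; rfl) (by decide)
    have n121 := nb 121 55 (by rw [sqImageCard_eq_nat]; rfl) (by decide)
    have n13 := nb 13 6 (by rw [sqImageCard_eq_nat]; rfl) (by decide)
    exact ⟨264, by decide, by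
      simpa using dvd_helper (a := 3) (b := 1) (c := 0) (d := 0) (e := 1) (f := 0) hN0
        (by simpa using n16) (by simpa using n9) (by simpa using n5) (by simpa using n7)
        (by simpa using n121) (by simpa using n13) hbig⟩
  · -- k = 6
    have n11 := nb 11 5 (by rw [sqImageCard_eq_nat]; rfl) (by decide)
    have n32 := nb 32 4 (by rw [sqImageCard_eq_nat]; rfl) (by decide)
    have n63 := nb 63 9 (by rw [sqImageCard_eq_nat]; rfl) (by decide)
    have n65 := nb 65 12 (by rw [sqImageCard_eq_nat]; rfl) (by decide)
    have n80 := nb 80 4 (by rw [sqImageCard_eq_nat]; rfl) (by decide)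
    have n91 := nb 91 18 (by rw [sqImageCard_eq_nat]; rfl) (by decide)
    have n117 := nb 117 18 (by rw [sqImageCard_eq_nat]; rfl) (by decide)
    have n208 := nb 208 12 (by rw [sqImageCard_eq_nat]; rfl) (by decide)
    have n27 := nb 27 9 (by rw [sqImageCard_eq_nat]; rfl) (by decide)
    have n25 := nb 25 10 (by rw [sqImageCard_eq_nat]; rfl) (by decide)
    have n49 := nb 49 21 (by rw [sqImageCard_eq_nat]; rfl) (by decide)
    have n169 := nb 169 78 (by rw [sqImageCard_eq_nat]; rfl) (by decide)
    by_cases hc13 : (13:ℕ) ∣ N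
    · have n5 : ¬ (5:ℕ) ∣ N := fun h5 =>
        n65 (Nat.Coprime.mul_dvd_of_dvd_of_dvd (by decide) h5 hc13)
      have n7 : ¬ (7:ℕ) ∣ N := fun h7 =>
        n91 (Nat.Coprime.mul_dvd_of_dvd_of_dvd (by decide) h7 hc13)
      have n9 : ¬ (9:ℕ) ∣ N := fun h9 =>
        n117 (Nat.Coprime.mul_dvd_of_dvd_of_dvd (by decide) h9 hc13)
      have n16 : ¬ (16:ℕ) ∣ N := fun h16 =>
        n208 (Nat.Coprime.mul_dvd_of_dvd_of_dvd (by decide) h16 hc13)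
      exact ⟨312, by decide, by
        simpa using dvd_helper (a := 3) (b := 1) (c := 0) (d := 0) (e := 0) (f := 1) hN0
          (by simpa using n16) (by simpa using n9) (by simpa using n5) (by simpa using n7)
          (by simpa using n11) (by simpa using n169) hbig⟩
    · by_cases hc5 : (5:ℕ) ∣ N
      · have n16 : ¬ (16:ℕ) ∣ N := fun h16 =>
          n80 (Nat.Coprime.mul_dvd_of_dvd_of_dvd (by decide) h16 hc5)
        by_cases hc7 : (7:ℕ) ∣ N
        · have n9 : ¬ (9:ℕ) ∣ N := fun h9 =>
            n63 (Nat.Coprime.mul_dvd_of_dvd_of_dvd (by decide) h9 hc7)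
          exact ⟨840, by decide, by
            simpa using dvd_helper (a := 3) (b := 1) (c := 1) (d := 1) (e := 0) (f := 0) hN0
              (by simpa using n16) (by simpa using n9) (by simpa using n25) (by simpa using n49)
              (by simpa using n11) (by simpa using hc13) hbig⟩
        · exact ⟨360, by decide, by
            simpa using dvd_helper (a := 3) (b := 2) (c := 1) (d := 0) (e := 0) (f := 0) hN0
              (by simpa using n16) (by simpa using n27) (by simpa using n25) (by simpa using hc7)
              (by simpa using n11) (by simpa using hc13) hbig⟩
      · by_cases hc7 : (7:ℕ) ∣ N
        · have n9 : ¬ (9:ℕ) ∣ N := fun h9 =>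
            n63 (Nat.Coprime.mul_dvd_of_dvd_of_dvd (by decide) h9 hc7)
          exact ⟨336, by decide, by
            simpa using dvd_helper (a := 4) (b := 1) (c := 0) (d := 1) (e := 0) (f := 0) hN0
              (by simpa using n32) (by simpa using n9) (by simpa using hc5) (by simpa using n49)
              (by simpa using n11) (by simpa using hc13) hbig⟩
        · exact ⟨144, by decide, by
            simpa using dvd_helper (a := 4) (b := 2) (c := 0) (d := 0) (e := 0) (f := 0) hN0
              (by simpa using n32) (by simpa using n27) (by simpa using hc5) (by simpa using hc7)
              (by simpa using n11) (by simpa using hc13) hbig⟩
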